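/- There is a universal constant C such that the following holds for all d ≥ 2. Fix γ ≤ 0.1 and 1/d ≤ ρ ≤ 0.1·√d, and let R₃ be the set of symmetric matrices M ∈ ℝ^{d×d} with ‖M‖_op ≤ γ and ‖M‖_F ≤ ρ. Then for every integer 1 ≤ ℓ ≤ d, there exists a finite set B of symmetric d×d matrices with |B| ≤ e^{C·ℓ·d·log d} such that for every M ∈ R₃ there exists B ∈ B with ‖M − B‖_op ≤ 2ρ/√ℓ. -/

import Mathlib

open MeasureTheory ProbabilityTheory Matrix Real
open scoped ENNReal

noncomputable section

/-- The `ℓ²`-operator norm of a real `d × d` matrix. -/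
def opNorm {d : ℕ} (M : Matrix (Fin d) (Fin d) ℝ) : ℝ :=
  ‖(Matrix.toEuclideanCLM (𝕜 := ℝ) M)‖

/-- The Frobenius norm of a real `d × d` matrix. -/
def frobNorm {d : ℕ} (M : Matrix (Fin d) (Fin d) ℝ) : ℝ :=
  Real.sqrt (∑ i, ∑ j, (M i j) ^ 2)

/-- The Euclidean norm of a vector in `ℝ^d`. -/
def vnorm {d : ℕ} (v : Fin d → ℝ) : ℝ := Real.sqrt (∑ i, (v i) ^ 2)

/-- The positive semidefinite square root of a matrix (junk value `0` if the matrix is not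
positive semidefinite). -/
def msqrt {d : ℕ} (S : Matrix (Fin d) (Fin d) ℝ) : Matrix (Fin d) (Fin d) ℝ :=
  letI := Classical.propDecidable S.PosSemidef
  if h : S.PosSemidef then
    (h.1.eigenvectorUnitary : Matrix (Fin d) (Fin d) ℝ) * diagonal (Real.sqrt ∘ h.1.eigenvalues) *
      (star h.1.eigenvectorUnitary : Matrix (Fin d) (Fin d) ℝ) else 0

/-- `Σ^{-1/2}`, the inverse of the positive square root. -/
def sqrtInv {d : ℕ} (S : Matrix (Fin d) (Fin d) ℝ) : Matrix (Fin d) (Fin d) ℝ :=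
  (msqrt S)⁻¹

/-- `(μ̂, Σ̂) ≈_{γ,ρ,τ} (μ, Σ)`: spectral, Frobenius, and Mahalanobis closeness. -/
def approx {d : ℕ} (γ ρ τ : ℝ) (p q : (Fin d → ℝ) × Matrix (Fin d) (Fin d) ℝ) : Prop :=
  opNorm (sqrtInv q.2 * p.2 * sqrtInv q.2 - 1) ≤ γ ∧
  frobNorm (sqrtInv q.2 * p.2 * sqrtInv q.2 - 1) ≤ ρ ∧
  vnorm (sqrtInv q.2 *ᵥ (p.1 - q.1)) ≤ τ

/-!
Diagonalise `M = ∑ᵢ μᵢ uᵢ uᵢᵀ` with orthonormal eigenvectors `uᵢ`. Since `∑ μᵢ² = ‖M‖_F² ≤ ρ²`,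
at most `ℓ` eigenvalues exceed `ρ / √ℓ` in absolute value, so keeping `ℓ` terms that include all
of them leaves a remainder of operator norm at most `ρ / √ℓ`. The kept part is a sum of `ℓ`
rank-one terms `μ u uᵀ` with `|μ| ≤ ρ ≤ d` and `‖u‖ = 1`; rounding `μ` and every coordinate of `u`
to a grid of mesh `1 / (8 d⁵)` moves it by at most `ρ / √ℓ` in operator norm, and there are at most
`(16 d⁶ + 1) ^ ((d + 1) ℓ) ≤ e ^ (22 ℓ d log d)` rounded sums.
-/

open Finset
open scoped Matrix.Norms.L2Operator

theorem opNorm_eq_norm {d : ℕ} (M : Matrix (Fin d) (Fin d) ℝ) : opNorm M = ‖M‖ := rfl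

theorem Finset.card_filter_lt_mul_le {ι : Type*} (s : Finset ι) {f : ι → ℝ} {t : ℝ} (ℓ : ℕ)
    (hf : ∀ i ∈ s, 0 ≤ f i) (hs : ∑ i ∈ s, f i ≤ t) :
    #{i ∈ s | t < ℓ * f i} ≤ ℓ := by
  set S := {i ∈ s | t < ℓ * f i}
  rcases S.eq_empty_or_nonempty with hS | hS
  · simp [hS]
  have hlt : #S * t < ℓ * t :=
    calc #S * t = ∑ _i ∈ S, t := by simp
      _ < ∑ i ∈ S, ℓ * f i := Finset.sum_lt_sum_of_nonempty hS fun i hi => (mem_filter.1 hi).2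
      _ = ℓ * ∑ i ∈ S, f i := by rw [Finset.mul_sum]
      _ ≤ ℓ * t := by
        gcongr
        exact (Finset.sum_le_sum_of_subset_of_nonneg (filter_subset _ s)
          fun i hi _ => hf i hi).trans hs
  exact_mod_cast (lt_of_mul_lt_mul_right hlt
    ((Finset.sum_nonneg hf).trans hs)).le

namespace Matrix

variable {n : Type*} [Fintype n] [DecidableEq n]

theorem toEuclideanCLM_vecMulVec (x y : EuclideanSpace ℝ n) :
    toEuclideanCLM (𝕜 := ℝ) (vecMulVec ⇑x ⇑y) = InnerProductSpace.rankOne ℝ x y := by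
  ext z i
  simp [vecMulVec_mulVec, ofLp_toEuclideanCLM, EuclideanSpace.inner_eq_star_dotProduct,
    dotProduct_comm, mul_comm]

theorem l2_opNorm_vecMulVec (x y : EuclideanSpace ℝ n) : ‖vecMulVec ⇑x ⇑y‖ = ‖x‖ * ‖y‖ := by
  rw [← l2_opNorm_toEuclideanCLM, toEuclideanCLM_vecMulVec, InnerProductSpace.norm_rankOne]

theorem l2_opNorm_smul_vecMulVec_sub_le (a b : ℝ) (u v : EuclideanSpace ℝ n) :
    ‖a • vecMulVec ⇑u ⇑u - b • vecMulVec ⇑v ⇑v‖ ≤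
      |a| * (‖u‖ + ‖v‖) * ‖u - v‖ + |a - b| * ‖v‖ ^ 2 := by
  have hsplit : a • vecMulVec ⇑u ⇑u - b • vecMulVec ⇑v ⇑v =
      a • (vecMulVec ⇑(u - v) ⇑u + vecMulVec ⇑v ⇑(u - v)) + (a - b) • vecMulVec ⇑v ⇑v := by
    simp only [WithLp.ofLp_sub, sub_vecMulVec, vecMulVec_sub]
    module
  rw [hsplit]
  refine (norm_add_le _ _).trans ?_
  simp only [norm_smul, Real.norm_eq_abs, l2_opNorm_vecMulVec]
  have hcross := norm_add_le (vecMulVec ⇑(u - v) ⇑u) (vecMulVec ⇑v ⇑(u - v))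
  rw [l2_opNorm_vecMulVec, l2_opNorm_vecMulVec] at hcross
  calc |a| * ‖vecMulVec ⇑(u - v) ⇑u + vecMulVec ⇑v ⇑(u - v)‖ + |a - b| * (‖v‖ * ‖v‖)
      ≤ |a| * (‖u - v‖ * ‖u‖ + ‖v‖ * ‖u - v‖) + |a - b| * (‖v‖ * ‖v‖) := by gcongr
    _ = |a| * (‖u‖ + ‖v‖) * ‖u - v‖ + |a - b| * ‖v‖ ^ 2 := by ring

theorem mul_diagonal_mul_transpose_eq_sum (U : Matrix n n ℝ) (w : n → ℝ) :
    U * diagonal w * Uᵀ = ∑ i, w i • vecMulVec (Uᵀ i) (Uᵀ i) := by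
  ext a b
  rw [Matrix.mul_apply]
  simp only [mul_diagonal, transpose_apply, Matrix.sum_apply, Matrix.smul_apply, vecMulVec_apply,
    smul_eq_mul]
  exact Finset.sum_congr rfl fun i _ => by ring

theorem l2_opNorm_unitary_mul_diagonal_mul_transpose (U : unitaryGroup n ℝ) (w : n → ℝ) :
    ‖(U : Matrix n n ℝ) * diagonal w * (U : Matrix n n ℝ)ᵀ‖ = ‖w‖ := by
  rw [← conjTranspose_eq_transpose_of_trivial, ← star_eq_conjTranspose,
    CStarRing.norm_mul_mem_unitary _ (Unitary.star_mem U.2), CStarRing.norm_mem_unitary_mul _ U.2,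
    l2_opNorm_diagonal]

end Matrix

namespace Matrix.IsHermitian

variable {n : Type*} [Fintype n] [DecidableEq n] {M : Matrix n n ℝ} (hM : M.IsHermitian)
include hM

theorem eq_mul_diagonal_eigenvalues_mul_transpose :
    M = (hM.eigenvectorUnitary : Matrix n n ℝ) * diagonal hM.eigenvalues *
      (hM.eigenvectorUnitary : Matrix n n ℝ)ᵀ := by
  conv_lhs => rw [hM.spectral_theorem]
  simp [star_eq_conjTranspose, RCLike.ofReal_real_eq_id]

theorem sum_eigenvalues_sq : ∑ i, hM.eigenvalues i ^ 2 = ∑ i, ∑ j, M i j ^ 2 := by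
  set U : Matrix n n ℝ := (hM.eigenvectorUnitary : Matrix n n ℝ)
  have hUU : Uᵀ * U = 1 := by
    simpa [star_eq_conjTranspose] using Unitary.coe_star_mul_self hM.eigenvectorUnitary
  have hMM : M * Mᵀ = U * (diagonal hM.eigenvalues * diagonal hM.eigenvalues) * Uᵀ := by
    conv_lhs => rw [hM.eq_mul_diagonal_eigenvalues_mul_transpose]
    simp only [transpose_mul, transpose_transpose, diagonal_transpose, Matrix.mul_assoc]
    rw [← Matrix.mul_assoc Uᵀ U, hUU, Matrix.one_mul]
  calc ∑ i, hM.eigenvalues i ^ 2 = trace (M * Mᵀ) := by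
        rw [hMM, trace_mul_cycle, ← Matrix.mul_assoc, hUU, Matrix.one_mul, diagonal_mul_diagonal,
          trace_diagonal]
        simp only [sq]
    _ = ∑ i, ∑ j, M i j ^ 2 := by simp [trace, Matrix.mul_apply, sq]

theorem exists_sum_smul_vecMulVec_approx {ρ : ℝ} (hρ : 0 ≤ ρ) (hF : ∑ i, ∑ j, M i j ^ 2 ≤ ρ ^ 2)
    {ℓ : ℕ} (hℓ : 0 < ℓ) (hℓn : ℓ ≤ Fintype.card n) :
    ∃ (c : Fin ℓ → ℝ) (u : Fin ℓ → EuclideanSpace ℝ n), (∀ k, |c k| ≤ ρ) ∧ (∀ k, ‖u k‖ = 1) ∧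
      ‖M - ∑ k, c k • vecMulVec ⇑(u k) ⇑(u k)‖ ≤ ρ / √ℓ := by
  set U : Matrix n n ℝ := (hM.eigenvectorUnitary : Matrix n n ℝ)
  set μ := hM.eigenvalues
  set b := hM.eigenvectorBasis
  have hμ : ∑ i, μ i ^ 2 ≤ ρ ^ 2 := hM.sum_eigenvalues_sq ▸ hF
  -- Markov: at most `ℓ` indices have `ρ² < ℓ μᵢ²`; enlarge them to a set `T` of exactly `ℓ`
  obtain ⟨T, hST, hT⟩ := exists_superset_card_eq
    (card_filter_lt_mul_le univ ℓ (fun i _ => sq_nonneg (μ i)) hμ) hℓn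
  set e : Fin ℓ ≃ T := (T.equivFin.trans (finCongr hT)).symm
  refine ⟨fun k => μ (e k), fun k => b (e k), fun k => ?_, fun k => b.orthonormal.1 _, ?_⟩
  · exact abs_le_of_sq_le_sq ((single_le_sum (fun i _ => sq_nonneg (μ i)) (mem_univ _)).trans hμ) hρ
  have hhead : ∑ k, μ (e k) • vecMulVec ⇑(b (e k)) ⇑(b (e k)) =
      U * diagonal (fun i => if i ∈ T then μ i else 0) * Uᵀ := by
    rw [mul_diagonal_mul_transpose_eq_sum, e.sum_comp (fun i : T => μ i • vecMulVec ⇑(b i) ⇑(b i)),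
      sum_coe_sort T fun i => μ i • vecMulVec ⇑(b i) ⇑(b i)]
    simp [U, b, ite_smul, sum_ite_mem]
  have htail : M - ∑ k, μ (e k) • vecMulVec ⇑(b (e k)) ⇑(b (e k)) =
      U * diagonal (fun i => if i ∈ T then 0 else μ i) * Uᵀ := by
    have hμ_split : μ = fun i => (if i ∈ T then 0 else μ i) + if i ∈ T then μ i else 0 := by
      funext i
      split_ifs <;> simp
    rw [hhead, sub_eq_iff_eq_add, ← Matrix.add_mul, ← Matrix.mul_add, diagonal_add, ← hμ_split]
    exact hM.eq_mul_diagonal_eigenvalues_mul_transpose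
  rw [htail, l2_opNorm_unitary_mul_diagonal_mul_transpose]
  refine (pi_norm_le_iff_of_nonneg (by positivity)).2 fun i => ?_
  split_ifs with hi
  · rw [norm_zero]
    positivity
  · have hsmall : ℓ * μ i ^ 2 ≤ ρ ^ 2 := not_lt.1 fun h => hi (hST (by simp [h]))
    refine (Real.norm_eq_abs _).trans_le (abs_le_of_sq_le_sq ?_ (by positivity))
    rw [div_pow, Real.sq_sqrt (Nat.cast_nonneg _), le_div_iff₀ (by positivity)]
    linarith

end Matrix.IsHermitian

def grid (h : ℝ) (N : ℕ) : Finset ℝ := (Icc (-(N : ℤ)) N).image fun k : ℤ => k * h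

theorem card_grid_le (h : ℝ) (N : ℕ) : #(grid h N) ≤ 2 * N + 1 := by
  refine card_image_le.trans ?_
  rw [Int.card_Icc]
  omega

theorem exists_mem_grid_abs_sub_le {h x : ℝ} {N : ℕ} (hh : 0 < h) (hx : |x| ≤ N * h) :
    ∃ y ∈ grid h N, |x - y| ≤ h := by
  have hlo : -(N : ℝ) ≤ x / h := by rw [le_div_iff₀ hh]; linarith [neg_abs_le x]
  have hhi : x / h ≤ N := by rw [div_le_iff₀ hh]; linarith [le_abs_self x]
  refine ⟨⌊x / h⌋ * h, mem_image.2 ⟨⌊x / h⌋, mem_Icc.2 ⟨?_, ?_⟩, rfl⟩, ?_⟩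
  · exact Int.le_floor.2 (by exact_mod_cast hlo)
  · exact_mod_cast (Int.floor_le _).trans hhi
  · have hfrac : x - ⌊x / h⌋ * h = (x / h - ⌊x / h⌋) * h := by field_simp
    rw [hfrac, abs_of_nonneg (mul_nonneg (sub_nonneg.2 (Int.floor_le _)) hh.le)]
    exact mul_le_of_le_one_left hh.le (by linarith [Int.lt_floor_add_one (x / h)])

section

variable {n : Type*} [Fintype n] [DecidableEq n]

theorem exists_mem_piFinset_grid_norm_sub_le {h : ℝ} {N : ℕ} (hh : 0 < h)
    (u : EuclideanSpace ℝ n) (hu : ∀ i, |u i| ≤ N * h) :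
    ∃ v ∈ Fintype.piFinset fun _ : n => grid h N,
      ‖u - WithLp.toLp 2 v‖ ≤ √(Fintype.card n) * h := by
  choose v hv huv using fun i => exists_mem_grid_abs_sub_le hh (hu i)
  refine ⟨v, Fintype.mem_piFinset.2 hv, ?_⟩
  rw [EuclideanSpace.norm_eq, ← Real.sqrt_sq hh.le, ← Real.sqrt_mul (Nat.cast_nonneg _)]
  gcongr
  calc ∑ i, ‖(u - WithLp.toLp 2 v) i‖ ^ 2 ≤ ∑ _i : n, h ^ 2 := by
        gcongr with i
        simpa using huv i
    _ = Fintype.card n * h ^ 2 := by simp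

def gridRankOneSums (n : Type*) [Fintype n] [DecidableEq n] (ℓ N : ℕ) (h : ℝ) :
    Finset (Matrix n n ℝ) :=
  (Fintype.piFinset fun _ : Fin ℓ => grid h N ×ˢ Fintype.piFinset fun _ : n => grid h N).image
    fun p => ∑ k, (p k).1 • vecMulVec (p k).2 (p k).2

theorem isSymm_of_mem_gridRankOneSums {ℓ N : ℕ} {h : ℝ} {B : Matrix n n ℝ}
    (hB : B ∈ gridRankOneSums n ℓ N h) : B.IsSymm := by
  obtain ⟨p, -, rfl⟩ := mem_image.1 hB
  simp [IsSymm, transpose_sum, transpose_smul, transpose_vecMulVec]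

theorem card_gridRankOneSums_le (ℓ N : ℕ) (h : ℝ) :
    #(gridRankOneSums n ℓ N h) ≤ (2 * N + 1) ^ ((Fintype.card n + 1) * ℓ) := by
  refine card_image_le.trans ?_
  simp only [Fintype.card_piFinset, card_product, prod_const, card_univ, Fintype.card_fin]
  rw [pow_mul, ← pow_succ']
  gcongr
  exact card_grid_le h N

theorem exists_mem_gridRankOneSums_norm_sub_le {ℓ N : ℕ} {h ε R : ℝ} (hh : 0 < h)
    (hRN : R ≤ N * h) (h1N : 1 ≤ N * h) (hhε : h ≤ ε) (hnε : √(Fintype.card n) * h ≤ ε)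
    (hε : ε ≤ 1) (c : Fin ℓ → ℝ) (u : Fin ℓ → EuclideanSpace ℝ n) (hc : ∀ k, |c k| ≤ R)
    (hu : ∀ k, ‖u k‖ = 1) :
    ∃ B ∈ gridRankOneSums n ℓ N h,
      ‖∑ k, c k • vecMulVec ⇑(u k) ⇑(u k) - B‖ ≤ ℓ * ((3 * R + 4) * ε) := by
  have hcoord (k : Fin ℓ) (i : n) : |u k i| ≤ N * h :=
    ((PiLp.norm_apply_le (u k) i).trans (hu k).le).trans h1N
  choose a ha hca using fun k => exists_mem_grid_abs_sub_le hh ((hc k).trans hRN)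
  choose v hv huv using fun k => exists_mem_piFinset_grid_norm_sub_le hh (u k) (hcoord k)
  refine ⟨∑ k, a k • vecMulVec (v k) (v k), mem_image.2 ⟨fun k => (a k, v k),
    Fintype.mem_piFinset.2 fun k => mem_product.2 ⟨ha k, hv k⟩, rfl⟩, ?_⟩
  rw [← sum_sub_distrib]
  refine (norm_sum_le _ _).trans ?_
  have hterm (k : Fin ℓ) :
      ‖c k • vecMulVec ⇑(u k) ⇑(u k) - a k • vecMulVec (v k) (v k)‖ ≤ (3 * R + 4) * ε := by
    set w := WithLp.toLp 2 (v k)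
    have huw : ‖u k - w‖ ≤ ε := (huv k).trans hnε
    have hw : ‖w‖ ≤ 2 :=
      calc ‖w‖ = ‖u k - (u k - w)‖ := by rw [sub_sub_cancel]
        _ ≤ ‖u k‖ + ‖u k - w‖ := norm_sub_le _ _
        _ ≤ 2 := by linarith [hu k]
    calc _ ≤ |c k| * (‖u k‖ + ‖w‖) * ‖u k - w‖ + |c k - a k| * ‖w‖ ^ 2 :=
          l2_opNorm_smul_vecMulVec_sub_le (c k) (a k) (u k) w
      _ ≤ R * 3 * ε + ε * 2 ^ 2 := by
          have hR : 0 ≤ R := (abs_nonneg _).trans (hc k)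
          have hε0 : 0 ≤ ε := hh.le.trans hhε
          gcongr ?_ * ?_ * ?_ + ?_ * ?_ ^ 2
          · exact hc k
          · linarith [hu k]
          · exact (hca k).trans hhε
      _ = (3 * R + 4) * ε := by ring
  exact (sum_le_sum fun k _ => hterm k).trans_eq (by simp)

end

theorem natCast_pow_le_exp_mul_log {d : ℕ} (hd : 2 ≤ d) (ℓ : ℕ) :
    (((2 * (8 * d ^ 6) + 1) ^ ((d + 1) * ℓ) : ℕ) : ℝ) ≤ exp (22 * ℓ * d * log d) := by
  have hbase : 2 * (8 * d ^ 6) + 1 ≤ d ^ 11 :=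
    calc 2 * (8 * d ^ 6) + 1 ≤ 2 ^ 5 * d ^ 6 := by nlinarith [Nat.one_le_pow 6 d (by omega)]
      _ ≤ d ^ 5 * d ^ 6 := by gcongr
      _ = d ^ 11 := by ring
  have hpow : (2 * (8 * d ^ 6) + 1) ^ ((d + 1) * ℓ) ≤ d ^ (22 * d * ℓ) :=
    calc _ ≤ (d ^ 11) ^ ((d + 1) * ℓ) := by gcongr
      _ ≤ d ^ (22 * d * ℓ) := by
        rw [← pow_mul]
        exact Nat.pow_le_pow_right (by omega) (by nlinarith)
  calc _ ≤ ((d ^ (22 * d * ℓ) : ℕ) : ℝ) := by exact_mod_cast hpow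
    _ = exp (22 * ℓ * d * log d) := by
      rw [show (22 : ℝ) * ℓ * d * log d = ((22 * d * ℓ : ℕ) : ℝ) * log d by push_cast; ring,
        Real.exp_nat_mul, Real.exp_log (by positivity)]
      push_cast
      rfl

theorem rounding_error_le_div_sqrt {d ℓ : ℕ} {ρ : ℝ} (hd : 2 ≤ d) (hρd : 1 / (d : ℝ) ≤ ρ)
    (hρ : ρ ≤ d) (hℓ : 1 ≤ ℓ) (hℓd : ℓ ≤ d) :
    ℓ * ((3 * ρ + 4) * (1 / (8 * d ^ 4))) ≤ ρ / √ℓ := by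
  have hd' : (2 : ℝ) ≤ d := by exact_mod_cast hd
  have hℓ' : (1 : ℝ) ≤ ℓ := by exact_mod_cast hℓ
  have hℓd' : (ℓ : ℝ) ≤ d := by exact_mod_cast hℓd
  have hρ0 : 0 ≤ ρ := (by positivity : (0 : ℝ) ≤ 1 / d).trans hρd
  calc (ℓ : ℝ) * ((3 * ρ + 4) * (1 / (8 * d ^ 4))) ≤ d * (5 * d * (1 / (8 * d ^ 4))) := by
        gcongr; linarith
    _ ≤ 1 / (d : ℝ) / d := by
        field_simp
        nlinarith
    _ ≤ ρ / d := by gcongr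
    _ ≤ ρ / √ℓ := by
        gcongr
        exact (Real.sqrt_le_self_iff.2 (Or.inr hℓ')).trans hℓd'

theorem exists_mem_gridRankOneSums_fin_norm_sub_le {d ℓ : ℕ} (hd : 2 ≤ d) {R : ℝ}
    (hR : R ≤ d) (c : Fin ℓ → ℝ) (u : Fin ℓ → EuclideanSpace ℝ (Fin d)) (hc : ∀ k, |c k| ≤ R)
    (hu : ∀ k, ‖u k‖ = 1) :
    ∃ B ∈ gridRankOneSums (Fin d) ℓ (8 * d ^ 6) (1 / (8 * d ^ 5)),
      ‖∑ k, c k • vecMulVec ⇑(u k) ⇑(u k) - B‖ ≤ ℓ * ((3 * R + 4) * (1 / (8 * d ^ 4))) := by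
  have hd' : (2 : ℝ) ≤ d := by exact_mod_cast hd
  have hsqrt_d : √(d : ℝ) ≤ d := Real.sqrt_le_self_iff.2 (Or.inr (by linarith))
  refine exists_mem_gridRankOneSums_norm_sub_le (by positivity) ?_ ?_ ?_ ?_ ?_ c u hc hu
  · push_cast; field_simp; linarith
  · push_cast; field_simp; linarith
  · gcongr <;> linarith
  · simp only [Fintype.card_fin]; field_simp; linarith
  · rw [div_le_one (by positivity)]
    nlinarith [one_le_pow₀ (n := 4) (by linarith : (1 : ℝ) ≤ d)]

/-- Lemma: operator-norm net for symmetric matrices with bounded operator and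
Frobenius norms. -/
theorem frobenius_ball_net :
    ∃ C > (0 : ℝ), ∀ d : ℕ, 2 ≤ d → ∀ γ ρ : ℝ, 0 < γ → γ ≤ 0.1 →
      1 / (d : ℝ) ≤ ρ → ρ ≤ 0.1 * Real.sqrt d →
      ∀ ℓ : ℕ, 1 ≤ ℓ → ℓ ≤ d →
      ∃ B : Finset (Matrix (Fin d) (Fin d) ℝ),
        (∀ M ∈ B, M.IsSymm) ∧
        (B.card : ℝ) ≤ Real.exp (C * ℓ * d * Real.log d) ∧
        ∀ M : Matrix (Fin d) (Fin d) ℝ, M.IsSymm → opNorm M ≤ γ → frobNorm M ≤ ρ →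
          ∃ B₀ ∈ B, opNorm (M - B₀) ≤ 2 * ρ / Real.sqrt ℓ := by
  refine ⟨22, by norm_num, fun d hd γ ρ _ _ hρd hρ ℓ hℓ hℓd => ?_⟩
  have hρ0 : 0 ≤ ρ := (by positivity : (0 : ℝ) ≤ 1 / d).trans hρd
  have hρ_le_d : ρ ≤ d := by
    have hd' : (1 : ℝ) ≤ d := by exact_mod_cast (by omega : 1 ≤ d)
    linarith [Real.sqrt_le_self_iff.2 (Or.inr hd')]
  refine ⟨gridRankOneSums (Fin d) ℓ (8 * d ^ 6) (1 / (8 * d ^ 5)),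
    fun B hB => isSymm_of_mem_gridRankOneSums hB, ?_, fun M hM _ hMF => ?_⟩
  · refine le_trans ?_ (natCast_pow_le_exp_mul_log hd ℓ)
    exact_mod_cast (card_gridRankOneSums_le ℓ _ _).trans_eq (by simp)
  obtain ⟨c, u, hc, hu, hMc⟩ := (isHermitian_iff_isSymm.2 hM).exists_sum_smul_vecMulVec_approx
    hρ0 (Real.sqrt_le_iff.1 hMF).2 hℓ (by simpa using hℓd)
  obtain ⟨B, hB, hcB⟩ := exists_mem_gridRankOneSums_fin_norm_sub_le hd hρ_le_d c u hc hu
  refine ⟨B, hB, ?_⟩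
  rw [opNorm_eq_norm]
  calc ‖M - B‖ ≤ ‖M - ∑ k, c k • vecMulVec ⇑(u k) ⇑(u k)‖ +
        ‖∑ k, c k • vecMulVec ⇑(u k) ⇑(u k) - B‖ := norm_sub_le_norm_sub_add_norm_sub _ _ _
    _ ≤ ρ / √ℓ + ρ / √ℓ :=
        add_le_add hMc (hcB.trans (rounding_error_le_div_sqrt hd hρd hρ_le_d hℓ hℓd))
    _ = 2 * ρ / √ℓ := by ring

end
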